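/- Let C be a Cauchy complete category and let (C, D) be a display map category which models Σ-types, functorial Id-types, and Π-types. Then (C, D̄) also models Π-types, where D̄ = (^⧄D)^⧄. -/
import Mathlib


open CategoryTheory Limits

universe v u

namespace DMCPaper

variable {C : Type u} [Category.{v} C]

/-- The class of morphisms with the left lifting property against every morphism of `M`. -/
def Llp (M : MorphismProperty C) : MorphismProperty C :=
  fun _ _ f => ∀ ⦃U V : C⦄ (g : U ⟶ V), M g → HasLiftingProperty f g

/-- The class of morphisms with the right lifting property against every morphism of `M`. -/
def Rlp (M : MorphismProperty C) : MorphismProperty C :=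
  fun _ _ f => ∀ ⦃U V : C⦄ (g : U ⟶ V), M g → HasLiftingProperty g f

/-- `D̄ = (^⧄D)^⧄`. -/
def Bar (D : MorphismProperty C) : MorphismProperty C := Rlp (Llp D)

/-- `(C, D)` is a display map category. -/
structure IsDisplayMapCategory (D : MorphismProperty C) : Prop where
  hasTerminal : HasTerminal C
  mem_of_isIso : ∀ ⦃X Y : C⦄ (f : X ⟶ Y), IsIso f → D f
  mem_of_isTerminal : ∀ ⦃X Y : C⦄ (f : X ⟶ Y), IsTerminal Y → D f
  hasPullback : ∀ ⦃X Y A : C⦄ (d : X ⟶ Y) (α : A ⟶ Y), D d → HasPullback α d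
  stable : ∀ ⦃P A X Y : C⦄ (h : P ⟶ A) (k : P ⟶ X) (α : A ⟶ Y) (d : X ⟶ Y),
      IsPullback h k α d → D d → D h

/-- `(C, D)` models `Σ`-types: `D` is closed under composition. -/
def ModelsSigma (D : MorphismProperty C) : Prop :=
  ∀ ⦃X Y Z : C⦄ (f : X ⟶ Y) (g : Y ⟶ Z), D f → D g → D (f ≫ g)

/-- `(C, D)` models (Paulin-Mohring) `Id`-types. -/
def ModelsId (D : MorphismProperty C) : Prop :=
  ∀ ⦃X Y : C⦄ (f : X ⟶ Y), D f →
    ∃ (P : C) (π₀ π₁ : P ⟶ X) (hP : IsPullback π₀ π₁ f f)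
      (I : C) (r : X ⟶ I) (ε : I ⟶ P),
      r ≫ ε = hP.lift (𝟙 X) (𝟙 X) rfl ∧ D ε ∧
      ∀ (π : P ⟶ X), (π = π₀ ∨ π = π₁) →
        ∀ ⦃A : C⦄ (α : A ⟶ X) ⦃Q : C⦄ (p : Q ⟶ A) (q : Q ⟶ I),
          IsPullback p q α (ε ≫ π) →
          ∀ (l : A ⟶ Q), l ≫ p = 𝟙 A → l ≫ q = α ≫ r → Llp D l

/-- Functorial `Id`-type structure on a display map category. -/
structure FunctorialIdData (D : MorphismProperty C) where
  P : ∀ ⦃X Y : C⦄ (f : X ⟶ Y), D f → C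
  π₀ : ∀ ⦃X Y : C⦄ (f : X ⟶ Y) (hf : D f), P f hf ⟶ X
  π₁ : ∀ ⦃X Y : C⦄ (f : X ⟶ Y) (hf : D f), P f hf ⟶ X
  isPullback : ∀ ⦃X Y : C⦄ (f : X ⟶ Y) (hf : D f), IsPullback (π₀ f hf) (π₁ f hf) f f
  I : ∀ ⦃X Y : C⦄ (f : X ⟶ Y), D f → C
  r : ∀ ⦃X Y : C⦄ (f : X ⟶ Y) (hf : D f), X ⟶ I f hf
  ε : ∀ ⦃X Y : C⦄ (f : X ⟶ Y) (hf : D f), I f hf ⟶ P f hf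
  fact : ∀ ⦃X Y : C⦄ (f : X ⟶ Y) (hf : D f),
    r f hf ≫ ε f hf = (isPullback f hf).lift (𝟙 X) (𝟙 X) rfl
  ε_mem : ∀ ⦃X Y : C⦄ (f : X ⟶ Y) (hf : D f), D (ε f hf)
  lp : ∀ ⦃X Y : C⦄ (f : X ⟶ Y) (hf : D f) (π : P f hf ⟶ X),
    (π = π₀ f hf ∨ π = π₁ f hf) →
    ∀ ⦃A : C⦄ (α : A ⟶ X) ⦃Q : C⦄ (p : Q ⟶ A) (q : Q ⟶ I f hf),
      IsPullback p q α (ε f hf ≫ π) →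
      ∀ (l : A ⟶ Q), l ≫ p = 𝟙 A → l ≫ q = α ≫ r f hf → Llp D l
  map : ∀ ⦃Y X X' : C⦄ (f : X ⟶ Y) (f' : X' ⟶ Y) (hf : D f) (hf' : D f')
    (u : X ⟶ X'), u ≫ f' = f → (I f hf ⟶ I f' hf')
  map_r : ∀ ⦃Y X X' : C⦄ (f : X ⟶ Y) (f' : X' ⟶ Y) (hf : D f) (hf' : D f')
    (u : X ⟶ X') (hu : u ≫ f' = f),
    r f hf ≫ map f f' hf hf' u hu = u ≫ r f' hf'
  map_ε : ∀ ⦃Y X X' : C⦄ (f : X ⟶ Y) (f' : X' ⟶ Y) (hf : D f) (hf' : D f')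
    (u : X ⟶ X') (hu : u ≫ f' = f),
    map f f' hf hf' u hu ≫ ε f' hf' =
      ε f hf ≫ (isPullback f' hf').lift (π₀ f hf ≫ u) (π₁ f hf ≫ u)
        (by rw [Category.assoc, Category.assoc, hu]; exact (isPullback f hf).w)
  map_id : ∀ ⦃X Y : C⦄ (f : X ⟶ Y) (hf : D f),
    map f f hf hf (𝟙 X) (Category.id_comp f) = 𝟙 (I f hf)
  map_comp : ∀ ⦃Y X X' X'' : C⦄ (f : X ⟶ Y) (f' : X' ⟶ Y) (f'' : X'' ⟶ Y)
    (hf : D f) (hf' : D f') (hf'' : D f'')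
    (u : X ⟶ X') (hu : u ≫ f' = f) (v : X' ⟶ X'') (hv : v ≫ f'' = f'),
    map f f'' hf hf'' (u ≫ v) (by rw [Category.assoc, hv, hu]) =
      map f f' hf hf' u hu ≫ map f' f'' hf' hf'' v hv

/-- `(C, D)` models functorial `Id`-types. -/
def ModelsFunctorialId (D : MorphismProperty C) : Prop :=
  Nonempty (FunctorialIdData D)

/-- `(C, D)` models `Π`-types. -/
def ModelsPi (D : MorphismProperty C) : Prop :=
  ∀ ⦃W X Y : C⦄ (g : W ⟶ X) (f : X ⟶ Y), D g → D f →
    ∃ (PI : C) (pf : PI ⟶ Y), D pf ∧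
      ∃ φ : ∀ ⦃A Q : C⦄ (y : A ⟶ Y) (a : Q ⟶ A) (q : Q ⟶ X),
          IsPullback a q y f →
          ({u : A ⟶ PI // u ≫ pf = y} ≃ {v : Q ⟶ W // v ≫ g = q}),
        ∀ ⦃A A' Q Q' : C⦄ (y : A ⟶ Y) (y' : A' ⟶ Y) (t : A ⟶ A') (ht : t ≫ y' = y)
          (a : Q ⟶ A) (q : Q ⟶ X) (hQ : IsPullback a q y f)
          (a' : Q' ⟶ A') (q' : Q' ⟶ X) (hQ' : IsPullback a' q' y' f)
          (s : Q ⟶ Q'), s ≫ a' = a ≫ t → s ≫ q' = q →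
          ∀ (u' : A' ⟶ PI) (hu' : u' ≫ pf = y'),
            (φ y a q hQ ⟨t ≫ u', by rw [Category.assoc, hu', ht]⟩).1 =
              s ≫ (φ y' a' q' hQ' ⟨u', hu'⟩).1

/-- `(L, R)` is a weak factorization system on `C`. -/
def IsWFS (L R : MorphismProperty C) : Prop :=
  (∀ ⦃X Y : C⦄ (f : X ⟶ Y), ∃ (Z : C) (l : X ⟶ Z) (ρ : Z ⟶ Y), L l ∧ R ρ ∧ l ≫ ρ = f)
  ∧ L = Llp R ∧ R = Rlp L

/-- `f` is a retract of `g` in the arrow category `C^2`. -/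
def IsRetractOf {X Y U V : C} (f : X ⟶ Y) (g : U ⟶ V) : Prop :=
  ∃ (iX : X ⟶ U) (iY : Y ⟶ V) (rX : U ⟶ X) (rY : V ⟶ Y),
    iX ≫ g = f ≫ iY ∧ rX ≫ f = g ≫ rY ∧ iX ≫ rX = 𝟙 X ∧ iY ≫ rY = 𝟙 Y

/-- `(C, D)` models the formation and introduction rules of `Id`-types. -/
def ModelsFormIntro (D : MorphismProperty C) : Prop :=
  ∀ ⦃A Γ : C⦄ (d : A ⟶ Γ), D d →
    ∃ (P : C) (π₀ π₁ : P ⟶ A) (hP : IsPullback π₀ π₁ d d)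
      (I : C) (r : A ⟶ I) (ε : I ⟶ P),
      r ≫ ε = hP.lift (𝟙 A) (𝟙 A) rfl ∧ D ε

/-- `(C, D)` models Paulin-Mohring `Id`-types. -/
def ModelsPaulinMohringId (D : MorphismProperty C) : Prop :=
  ∀ ⦃A Γ : C⦄ (d : A ⟶ Γ), D d →
    ∃ (P : C) (π₀ π₁ : P ⟶ A) (hP : IsPullback π₀ π₁ d d)
      (I : C) (r : A ⟶ I) (ε : I ⟶ P),
      r ≫ ε = hP.lift (𝟙 A) (𝟙 A) rfl ∧ D ε ∧
      ∀ (π : P ⟶ A), (π = π₀ ∨ π = π₁) →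
        ∀ ⦃Δ : C⦄ (σ : Δ ⟶ A) ⦃Q : C⦄ (p : Q ⟶ Δ) (q : Q ⟶ I),
          IsPullback p q σ (ε ≫ π) →
          ∀ (l : Δ ⟶ Q), l ≫ p = 𝟙 Δ → l ≫ q = σ ≫ r → Llp D l

/-- `(C, D)` models parametrized Martin-Löf `Id`-types (which includes the
plain Martin-Löf elimination). -/
def ModelsParamMLId (D : MorphismProperty C) : Prop :=
  ∀ ⦃A Γ : C⦄ (d : A ⟶ Γ), D d →
    ∃ (P : C) (π₀ π₁ : P ⟶ A) (hP : IsPullback π₀ π₁ d d)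
      (I : C) (r : A ⟶ I) (ε : I ⟶ P),
      r ≫ ε = hP.lift (𝟙 A) (𝟙 A) rfl ∧ D ε ∧
      ∀ ⦃Δ : C⦄ (σ : Δ ⟶ Γ)
        ⦃A₀ : C⦄ (pA : A₀ ⟶ Δ) (qA : A₀ ⟶ A), IsPullback pA qA σ d →
        ∀ ⦃Q : C⦄ (pI : Q ⟶ Δ) (qI : Q ⟶ I), IsPullback pI qI σ (ε ≫ π₀ ≫ d) →
        ∀ (m : A₀ ⟶ Q), m ≫ pI = pA → m ≫ qI = qA ≫ r →
          Llp D m ∧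
          ∀ ⦃Θ : C⦄ (θ : Θ ⟶ Q), D θ →
            ∀ ⦃E : C⦄ (e₁ : E ⟶ Θ) (e₂ : E ⟶ A₀), IsPullback e₁ e₂ θ m → Llp D e₁

/-- `^⧄D` is stable under pullback along morphisms of `D`. -/
def LlpStableUnderPullbackAlongD (D : MorphismProperty C) : Prop :=
  ∀ ⦃P A X Y : C⦄ (h : P ⟶ A) (k : P ⟶ X) (d : A ⟶ Y) (l : X ⟶ Y),
    IsPullback h k d l → D d → Llp D l → Llp D h




section Aux

variable {D : MorphismProperty C}

theorem bar_of_mem {X Y : C} {f : X ⟶ Y} (hf : D f) : Bar D f :=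
  fun _ _ g hg => hg f hf

theorem bar_of_retract {X Y U V : C} {f : X ⟶ Y} {g : U ⟶ V}
    (h : IsRetractOf f g) (hg : Bar D g) : Bar D f := by
  obtain ⟨iX, iY, rX, rY, h1, h2, h3, h4⟩ := h
  intro A B l hl
  haveI := hg l hl
  constructor
  intro u v sq
  have sq2 : CommSq (u ≫ iX) l g (v ≫ iY) := ⟨by
    rw [Category.assoc, h1, ← Category.assoc, sq.w, Category.assoc]⟩
  exact ⟨⟨⟨sq2.lift ≫ rX, by
      rw [← Category.assoc, sq2.fac_left, Category.assoc, h3, Category.comp_id], by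
      rw [Category.assoc, h2, ← Category.assoc, sq2.fac_right, Category.assoc, h4,
        Category.comp_id]⟩⟩⟩

/-- Mapping path space factorization: every morphism factors as a map with the left
lifting property against `D` followed by a display map. -/
theorem exists_fact (hDMC : IsDisplayMapCategory D) (hSigma : ModelsSigma D)
    (idd : FunctorialIdData D) {X Y : C} (f : X ⟶ Y) :
    ∃ (Z : C) (l : X ⟶ Z) (ρ : Z ⟶ Y), Llp D l ∧ D ρ ∧ l ≫ ρ = f := by
  haveI : HasTerminal C := hDMC.hasTerminal
  have htY : D (terminal.from Y) := hDMC.mem_of_isTerminal _ terminalIsTerminal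
  have htX : D (terminal.from X) := hDMC.mem_of_isTerminal _ terminalIsTerminal
  have hP := idd.isPullback (terminal.from Y) htY
  have hεD := idd.ε_mem (terminal.from Y) htY
  have hπ₀D : D (idd.π₀ (terminal.from Y) htY) := hDMC.stable _ _ _ _ hP htY
  have hπ₁D : D (idd.π₁ (terminal.from Y) htY) := hDMC.stable _ _ _ _ hP.flip htY
  have hεπ₀ : D (idd.ε (terminal.from Y) htY ≫ idd.π₀ (terminal.from Y) htY) :=
    hSigma _ _ hεD hπ₀D
  haveI : HasPullback f (idd.ε (terminal.from Y) htY ≫ idd.π₀ (terminal.from Y) htY) :=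
    hDMC.hasPullback _ f hεπ₀
  have hPf := IsPullback.of_hasPullback f
    (idd.ε (terminal.from Y) htY ≫ idd.π₀ (terminal.from Y) htY)
  have hre : idd.r (terminal.from Y) htY ≫ idd.ε (terminal.from Y) htY ≫
      idd.π₀ (terminal.from Y) htY = 𝟙 Y := by
    rw [← Category.assoc, idd.fact, IsPullback.lift_fst]
  have hre' : idd.r (terminal.from Y) htY ≫ idd.ε (terminal.from Y) htY ≫
      idd.π₁ (terminal.from Y) htY = 𝟙 Y := by
    rw [← Category.assoc, idd.fact, IsPullback.lift_snd]
  -- the left factor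
  have hlcomm : 𝟙 X ≫ f = (f ≫ idd.r (terminal.from Y) htY) ≫
      (idd.ε (terminal.from Y) htY ≫ idd.π₀ (terminal.from Y) htY) := by
    rw [Category.id_comp, Category.assoc, hre, Category.comp_id]
  set l := hPf.lift (𝟙 X) (f ≫ idd.r (terminal.from Y) htY) hlcomm with hldef
  have hlLlp : Llp D l :=
    idd.lp (terminal.from Y) htY (idd.π₀ (terminal.from Y) htY) (Or.inl rfl) f _ _ hPf l
      (hPf.lift_fst _ _ _) (hPf.lift_snd _ _ _)
  -- the right factor
  haveI : HasPullback (terminal.from Y) (terminal.from X) := hDMC.hasPullback _ _ htX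
  have hB := IsPullback.of_hasPullback (terminal.from Y) (terminal.from X)
  have hχcomm : (pullback.snd (terminal.from Y) (terminal.from X) ≫ f) ≫ terminal.from Y =
      pullback.fst (terminal.from Y) (terminal.from X) ≫ terminal.from Y := by
    apply terminalIsTerminal.hom_ext
  set χ := hP.lift (pullback.snd (terminal.from Y) (terminal.from X) ≫ f)
    (pullback.fst (terminal.from Y) (terminal.from X)) hχcomm with hχdef
  have hρcomm : (pullback.snd f (idd.ε (terminal.from Y) htY ≫
        idd.π₀ (terminal.from Y) htY) ≫ idd.ε (terminal.from Y) htY ≫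
        idd.π₁ (terminal.from Y) htY) ≫ terminal.from Y =
      pullback.fst f (idd.ε (terminal.from Y) htY ≫ idd.π₀ (terminal.from Y) htY) ≫
        terminal.from X := by
    apply terminalIsTerminal.hom_ext
  set h := hB.lift (pullback.snd f (idd.ε (terminal.from Y) htY ≫
    idd.π₀ (terminal.from Y) htY) ≫ idd.ε (terminal.from Y) htY ≫
    idd.π₁ (terminal.from Y) htY)
    (pullback.fst f (idd.ε (terminal.from Y) htY ≫ idd.π₀ (terminal.from Y) htY))
    hρcomm with hhdef
  -- the middle square is a pullback
  have hbot : IsPullback χ (pullback.snd (terminal.from Y) (terminal.from X))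
      (idd.π₀ (terminal.from Y) htY) f := by
    apply IsPullback.of_right (h₁₂ := idd.π₁ (terminal.from Y) htY)
      (v₁₃ := terminal.from Y) (h₂₂ := terminal.from Y)
    · rw [hχdef, hP.lift_snd]
      have : f ≫ terminal.from Y = terminal.from X := terminalIsTerminal.hom_ext _ _
      rw [this]
      exact hB
    · rw [hχdef, hP.lift_fst]
    · exact hP.flip
  have hmid : h ≫ χ = pullback.snd f (idd.ε (terminal.from Y) htY ≫
      idd.π₀ (terminal.from Y) htY) ≫ idd.ε (terminal.from Y) htY := by
    apply hP.hom_ext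
    · rw [Category.assoc, hχdef, hP.lift_fst, ← Category.assoc, hhdef, hB.lift_snd,
        Category.assoc]
      exact pullback.condition
    · rw [Category.assoc, hχdef, hP.lift_snd, hhdef, hB.lift_fst, Category.assoc]
  have htop : IsPullback (pullback.snd f (idd.ε (terminal.from Y) htY ≫
      idd.π₀ (terminal.from Y) htY)) h (idd.ε (terminal.from Y) htY) χ := by
    apply IsPullback.of_bot (v₂₁ := pullback.snd (terminal.from Y) (terminal.from X))
      (v₂₂ := idd.π₀ (terminal.from Y) htY) (h₃₁ := f)
    · have : h ≫ pullback.snd (terminal.from Y) (terminal.from X) =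
          pullback.fst f (idd.ε (terminal.from Y) htY ≫ idd.π₀ (terminal.from Y) htY) := by
        rw [hhdef, hB.lift_snd]
      rw [this]
      exact hPf.flip
    · exact hmid.symm
    · exact hbot
  have hhD : D h := hDMC.stable _ _ _ _ htop.flip hεD
  have hprYD : D (pullback.fst (terminal.from Y) (terminal.from X)) :=
    hDMC.stable _ _ _ _ hB htX
  refine ⟨_, l, pullback.snd f _ ≫ idd.ε (terminal.from Y) htY ≫
    idd.π₁ (terminal.from Y) htY, hlLlp, ?_, ?_⟩
  · have : h ≫ pullback.fst (terminal.from Y) (terminal.from X) =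
        pullback.snd f _ ≫ idd.ε (terminal.from Y) htY ≫ idd.π₁ (terminal.from Y) htY := by
      rw [hhdef, hB.lift_fst]
    rw [← this]
    exact hSigma _ _ hhD hprYD
  · rw [hldef, ← Category.assoc, hPf.lift_snd, Category.assoc, hre', Category.comp_id]

theorem exists_retract (hDMC : IsDisplayMapCategory D) (hSigma : ModelsSigma D)
    (idd : FunctorialIdData D) {X Y : C} (f : X ⟶ Y) (hf : Bar D f) :
    ∃ (Z : C) (i : X ⟶ Z) (p : Z ⟶ X) (ρ : Z ⟶ Y),
      D ρ ∧ i ≫ p = 𝟙 X ∧ i ≫ ρ = f ∧ p ≫ f = ρ := by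
  obtain ⟨Z, l, ρ, hl, hρ, hlρ⟩ := exists_fact hDMC hSigma idd f
  haveI := hf l hl
  have sq : CommSq (𝟙 X) l f ρ := ⟨by rw [Category.id_comp, hlρ]⟩
  exact ⟨Z, l, sq.lift, ρ, hρ, sq.fac_left, hlρ, sq.fac_right⟩

end Aux


theorem main_aux (hC : IsIdempotentComplete C) {D : MorphismProperty C}
    (hDMC : IsDisplayMapCategory D) (hPi : ModelsPi D)
    {W X Y Xb Wb : C} (f : X ⟶ Y) (g : W ⟶ X)
    (i : X ⟶ Xb) (p : Xb ⟶ X) (ρ : Xb ⟶ Y) (hρD : D ρ)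
    (hip : i ≫ p = 𝟙 X) (hiρ : i ≫ ρ = f) (hpf : p ≫ f = ρ)
    (lg : W ⟶ Wb) (jg : Wb ⟶ W) (m : Wb ⟶ X) (hmD : D m)
    (hlj : lg ≫ jg = 𝟙 W) (hlm : lg ≫ m = g) (hjm : jg ≫ g = m) :
    ∃ (PI : C) (pf : PI ⟶ Y), Bar D pf ∧
      ∃ φ : ∀ ⦃A Q : C⦄ (y : A ⟶ Y) (a : Q ⟶ A) (q : Q ⟶ X),
          IsPullback a q y f →
          ({u : A ⟶ PI // u ≫ pf = y} ≃ {v : Q ⟶ W // v ≫ g = q}),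
        ∀ ⦃A A' Q Q' : C⦄ (y : A ⟶ Y) (y' : A' ⟶ Y) (t : A ⟶ A') (ht : t ≫ y' = y)
          (a : Q ⟶ A) (q : Q ⟶ X) (hQ : IsPullback a q y f)
          (a' : Q' ⟶ A') (q' : Q' ⟶ X) (hQ' : IsPullback a' q' y' f)
          (s : Q ⟶ Q'), s ≫ a' = a ≫ t → s ≫ q' = q →
          ∀ (u' : A' ⟶ PI) (hu' : u' ≫ pf = y'),
            (φ y a q hQ ⟨t ≫ u', by rw [Category.assoc, hu', ht]⟩).1 =
              s ≫ (φ y' a' q' hQ' ⟨u', hu'⟩).1 := by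
  haveI hPBm : HasPullback p m := hDMC.hasPullback m p hmD
  have hM : IsPullback (pullback.fst p m) (pullback.snd p m) p m :=
    IsPullback.of_hasPullback p m
  obtain ⟨PI0, pf0, hpf0D, Φ, hΦ⟩ :=
    hPi (pullback.fst p m) ρ (hDMC.stable _ _ _ _ hM hmD) hρD
  haveI hPBy : ∀ {A : C} (y : A ⟶ Y), HasPullback y ρ := fun {A} y => hDMC.hasPullback ρ y hρD
  have hcomm1 : ∀ {A : C} (y : A ⟶ Y),
      pullback.fst y ρ ≫ y = (pullback.snd y ρ ≫ (p ≫ i)) ≫ ρ := by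
    intro A y
    simp only [Category.assoc, hiρ, hpf]
    exact pullback.condition
  have hstilde : ∀ {A : C} (y : A ⟶ Y) (u : A ⟶ PI0), u ≫ pf0 = y →
      (pullback.fst y ρ ≫ u) ≫ pf0 = pullback.snd y ρ ≫ ρ := by
    intro A y u hu
    rw [Category.assoc, hu, pullback.condition]
  have hetid : ∀ {A : C} (y : A ⟶ Y),
      pullback.lift (pullback.fst y ρ) (pullback.snd y ρ ≫ (p ≫ i)) (hcomm1 y) ≫
        pullback.lift (pullback.fst y ρ) (pullback.snd y ρ ≫ (p ≫ i)) (hcomm1 y) =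
      pullback.lift (pullback.fst y ρ) (pullback.snd y ρ ≫ (p ≫ i)) (hcomm1 y) := by
    intro A y
    apply pullback.hom_ext <;>
      simp [pullback.lift_fst, pullback.lift_snd, pullback.lift_fst_assoc,
        pullback.lift_snd_assoc, Category.assoc, reassoc_of% hip, hip, Category.comp_id]
  rcases hvdef : Φ pf0 (pullback.fst pf0 ρ) (pullback.snd pf0 ρ)
      (IsPullback.of_hasPullback pf0 ρ) ⟨𝟙 PI0, Category.id_comp pf0⟩ with ⟨vstar, hvm⟩
  have hcomm2 : pullback.snd pf0 ρ ≫ p =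
      (pullback.lift (pullback.fst pf0 ρ) (pullback.snd pf0 ρ ≫ (p ≫ i)) (hcomm1 pf0) ≫
        vstar ≫ pullback.snd p m ≫ (jg ≫ lg)) ≫ m := by
    simp only [Category.assoc, hlm, hjm, ← pullback.condition, reassoc_of% hvm,
      pullback.lift_snd_assoc, hip, Category.comp_id]
  rcases hedef : (Φ pf0 (pullback.fst pf0 ρ) (pullback.snd pf0 ρ)
      (IsPullback.of_hasPullback pf0 ρ)).symm
      ⟨hM.lift (pullback.snd pf0 ρ)
        (pullback.lift (pullback.fst pf0 ρ) (pullback.snd pf0 ρ ≫ (p ≫ i)) (hcomm1 pf0) ≫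
          vstar ≫ pullback.snd p m ≫ (jg ≫ lg)) hcomm2,
        hM.lift_fst _ _ _⟩ with ⟨e, he⟩
  have hΦe : Φ pf0 (pullback.fst pf0 ρ) (pullback.snd pf0 ρ)
      (IsPullback.of_hasPullback pf0 ρ) ⟨e, he⟩ =
      ⟨hM.lift (pullback.snd pf0 ρ)
        (pullback.lift (pullback.fst pf0 ρ) (pullback.snd pf0 ρ ≫ (p ≫ i)) (hcomm1 pf0) ≫
          vstar ≫ pullback.snd p m ≫ (jg ≫ lg)) hcomm2,
        hM.lift_fst _ _ _⟩ := by
    rw [← hedef, Equiv.apply_symm_apply]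
  have hΦe_ω : (Φ pf0 (pullback.fst pf0 ρ) (pullback.snd pf0 ρ)
      (IsPullback.of_hasPullback pf0 ρ) ⟨e, he⟩).1 ≫ pullback.snd p m =
      pullback.lift (pullback.fst pf0 ρ) (pullback.snd pf0 ρ ≫ (p ≫ i)) (hcomm1 pf0) ≫
        vstar ≫ pullback.snd p m ≫ (jg ≫ lg) := by
    rw [hΦe]
    exact hM.lift_snd _ _ _
  have h2 : ∀ {A : C} (y : A ⟶ Y) (u : A ⟶ PI0) (hu : u ≫ pf0 = y),
      (Φ y (pullback.fst y ρ) (pullback.snd y ρ) (IsPullback.of_hasPullback y ρ) ⟨u, hu⟩).1 =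
        pullback.lift (pullback.fst y ρ ≫ u) (pullback.snd y ρ) (hstilde y u hu) ≫ vstar := by
    intro A y u hu
    have hn := hΦ y pf0 u hu (pullback.fst y ρ) (pullback.snd y ρ)
      (IsPullback.of_hasPullback y ρ) (pullback.fst pf0 ρ) (pullback.snd pf0 ρ)
      (IsPullback.of_hasPullback pf0 ρ)
      (pullback.lift (pullback.fst y ρ ≫ u) (pullback.snd y ρ) (hstilde y u hu))
      (pullback.lift_fst _ _ _) (pullback.lift_snd _ _ _) (𝟙 PI0) (Category.id_comp pf0)
    rw [hvdef] at hn
    have harg : (⟨u ≫ 𝟙 PI0, by rw [Category.assoc, Category.id_comp pf0, hu]⟩ :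
        {u0 : A ⟶ PI0 // u0 ≫ pf0 = y}) = ⟨u, hu⟩ := Subtype.ext (Category.comp_id u)
    rwa [harg] at hn
  have key : ∀ {A : C} (y : A ⟶ Y) (u : A ⟶ PI0) (hu : u ≫ pf0 = y),
      (Φ y (pullback.fst y ρ) (pullback.snd y ρ) (IsPullback.of_hasPullback y ρ)
          ⟨u ≫ e, by rw [Category.assoc, he, hu]⟩).1 ≫ pullback.snd p m =
        pullback.lift (pullback.fst y ρ) (pullback.snd y ρ ≫ (p ≫ i)) (hcomm1 y) ≫
          (Φ y (pullback.fst y ρ) (pullback.snd y ρ) (IsPullback.of_hasPullback y ρ)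
            ⟨u, hu⟩).1 ≫ pullback.snd p m ≫ (jg ≫ lg) := by
    intro A y u hu
    have hn := hΦ y pf0 u hu (pullback.fst y ρ) (pullback.snd y ρ)
      (IsPullback.of_hasPullback y ρ) (pullback.fst pf0 ρ) (pullback.snd pf0 ρ)
      (IsPullback.of_hasPullback pf0 ρ)
      (pullback.lift (pullback.fst y ρ ≫ u) (pullback.snd y ρ) (hstilde y u hu))
      (pullback.lift_fst _ _ _) (pullback.lift_snd _ _ _) e he
    rw [hn, Category.assoc, hΦe_ω, h2 y u hu]
    have hswap : pullback.lift (pullback.fst y ρ ≫ u) (pullback.snd y ρ) (hstilde y u hu) ≫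
        pullback.lift (pullback.fst pf0 ρ) (pullback.snd pf0 ρ ≫ (p ≫ i)) (hcomm1 pf0) =
        pullback.lift (pullback.fst y ρ) (pullback.snd y ρ ≫ (p ≫ i)) (hcomm1 y) ≫
          pullback.lift (pullback.fst y ρ ≫ u) (pullback.snd y ρ) (hstilde y u hu) := by
      apply pullback.hom_ext <;>
        simp [pullback.lift_fst, pullback.lift_snd, pullback.lift_fst_assoc,
          pullback.lift_snd_assoc, Category.assoc]
    rw [reassoc_of% hswap]
    simp only [Category.assoc]
  have hee : e ≫ e = e := by
    have h0 : (⟨e ≫ e, by rw [Category.assoc, he, he]⟩ :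
        {u0 : PI0 ⟶ PI0 // u0 ≫ pf0 = pf0}) = ⟨e, he⟩ := by
      apply (Φ pf0 (pullback.fst pf0 ρ) (pullback.snd pf0 ρ)
        (IsPullback.of_hasPullback pf0 ρ)).injective
      apply Subtype.ext
      apply hM.hom_ext
      · exact ((Φ pf0 (pullback.fst pf0 ρ) (pullback.snd pf0 ρ)
          (IsPullback.of_hasPullback pf0 ρ)
          ⟨e ≫ e, by rw [Category.assoc, he, he]⟩).2).trans
          ((Φ pf0 (pullback.fst pf0 ρ) (pullback.snd pf0 ρ)
          (IsPullback.of_hasPullback pf0 ρ) ⟨e, he⟩).2).symm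
      · rw [key pf0 e he, reassoc_of% hΦe_ω, hΦe_ω]
        simp only [Category.assoc, reassoc_of% (hetid pf0), reassoc_of% hlj, hlj,
          Category.comp_id]
    exact congrArg Subtype.val h0
  obtain ⟨PI, S, R, hSR, hRS⟩ := hC.idempotents_split PI0 e hee
  have heR : e ≫ R = R := by rw [← hRS, Category.assoc, hSR, Category.comp_id]
  have hUS : ∀ {A : C} {y : A ⟶ Y} (u : A ⟶ PI), u ≫ S ≫ pf0 = y → (u ≫ S) ≫ pf0 = y :=
    fun u h => by rw [Category.assoc]; exact h
  have hXe : ∀ {A : C} {y : A ⟶ Y} (x : A ⟶ PI0), x ≫ pf0 = y → (x ≫ e) ≫ pf0 = y :=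
    fun x h => by rw [Category.assoc, he]; exact h
  have hinvmem : ∀ {A : C} {y : A ⟶ Y} (x : A ⟶ PI0), x ≫ pf0 = y →
      (x ≫ R) ≫ S ≫ pf0 = y := by
    intro A y x hx
    rw [Category.assoc, ← Category.assoc R S pf0, hRS, he]
    exact hx
  have hk : ∀ {A Q : C} (y : A ⟶ Y) (a : Q ⟶ A) (q : Q ⟶ X), IsPullback a q y f →
      a ≫ y = (q ≫ i) ≫ ρ := by
    intro A Q y a q hQ
    rw [Category.assoc, hiρ, hQ.w]
  have hk' : ∀ {A : C} (y : A ⟶ Y),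
      pullback.fst y ρ ≫ y = (pullback.snd y ρ ≫ p) ≫ f := by
    intro A y
    rw [Category.assoc, hpf, pullback.condition]
  have hb : ∀ {A Q : C} (y : A ⟶ Y) (a : Q ⟶ A) (q : Q ⟶ X) (hQ : IsPullback a q y f)
      (v0 : Q ⟶ W), v0 ≫ g = q →
      pullback.snd y ρ ≫ p =
        (hQ.lift (pullback.fst y ρ) (pullback.snd y ρ ≫ p) (hk' y) ≫ v0 ≫ lg) ≫ m := by
    intro A Q y a q hQ v0 hv0
    simp only [Category.assoc, hlm, hv0, IsPullback.lift_snd]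
  have hmem : ∀ {A Q : C} (y : A ⟶ Y) (a : Q ⟶ A) (q : Q ⟶ X) (hQ : IsPullback a q y f)
      (u0 : A ⟶ PI0) (hu0 : u0 ≫ pf0 = y),
      (pullback.lift a (q ≫ i) (hk y a q hQ) ≫
        (Φ y (pullback.fst y ρ) (pullback.snd y ρ) (IsPullback.of_hasPullback y ρ)
          ⟨u0, hu0⟩).1 ≫ pullback.snd p m ≫ jg) ≫ g = q := by
    intro A Q y a q hQ u0 hu0
    have h3 := (Φ y (pullback.fst y ρ) (pullback.snd y ρ)
      (IsPullback.of_hasPullback y ρ) ⟨u0, hu0⟩).2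
    simp only [Category.assoc, hjm, ← pullback.condition, reassoc_of% h3,
      pullback.lift_snd_assoc, hip, Category.comp_id]
  have hkk : ∀ {A Q : C} (y : A ⟶ Y) (a : Q ⟶ A) (q : Q ⟶ X) (hQ : IsPullback a q y f),
      hQ.lift (pullback.fst y ρ) (pullback.snd y ρ ≫ p) (hk' y) ≫
        pullback.lift a (q ≫ i) (hk y a q hQ) =
      pullback.lift (pullback.fst y ρ) (pullback.snd y ρ ≫ (p ≫ i)) (hcomm1 y) := by
    intro A Q y a q hQ
    apply pullback.hom_ext <;>
      simp [IsPullback.lift_fst, IsPullback.lift_snd, IsPullback.lift_fst_assoc,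
        IsPullback.lift_snd_assoc, pullback.lift_fst, pullback.lift_snd,
        pullback.lift_fst_assoc, pullback.lift_snd_assoc, Category.assoc]
  have hkk2 : ∀ {A Q : C} (y : A ⟶ Y) (a : Q ⟶ A) (q : Q ⟶ X) (hQ : IsPullback a q y f),
      pullback.lift a (q ≫ i) (hk y a q hQ) ≫
        hQ.lift (pullback.fst y ρ) (pullback.snd y ρ ≫ p) (hk' y) = 𝟙 Q := by
    intro A Q y a q hQ
    apply hQ.hom_ext <;>
      simp [IsPullback.lift_fst, IsPullback.lift_snd, IsPullback.lift_fst_assoc,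
        IsPullback.lift_snd_assoc, pullback.lift_fst, pullback.lift_snd,
        pullback.lift_fst_assoc, pullback.lift_snd_assoc, Category.assoc, hip,
        Category.id_comp, Category.comp_id]
  have main1 : ∀ {A Q : C} (y : A ⟶ Y) (a : Q ⟶ A) (q : Q ⟶ X) (hQ : IsPullback a q y f)
      (u0 : A ⟶ PI0) (hu0 : u0 ≫ pf0 = y),
      hM.lift (pullback.snd y ρ)
        (hQ.lift (pullback.fst y ρ) (pullback.snd y ρ ≫ p) (hk' y) ≫
          (pullback.lift a (q ≫ i) (hk y a q hQ) ≫
            (Φ y (pullback.fst y ρ) (pullback.snd y ρ) (IsPullback.of_hasPullback y ρ)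
              ⟨u0, hu0⟩).1 ≫ pullback.snd p m ≫ jg) ≫ lg)
        (hb y a q hQ _ (hmem y a q hQ u0 hu0)) =
      (Φ y (pullback.fst y ρ) (pullback.snd y ρ) (IsPullback.of_hasPullback y ρ)
        ⟨u0 ≫ e, hXe u0 hu0⟩).1 := by
    intro A Q y a q hQ u0 hu0
    apply hM.hom_ext
    · rw [hM.lift_fst]
      exact ((Φ y (pullback.fst y ρ) (pullback.snd y ρ) (IsPullback.of_hasPullback y ρ)
        ⟨u0 ≫ e, hXe u0 hu0⟩).2).symm
    · rw [hM.lift_snd, key y u0 hu0, ← hkk y a q hQ]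
      simp only [Category.assoc]
  have main1' : ∀ {A Q : C} (y : A ⟶ Y) (a : Q ⟶ A) (q : Q ⟶ X) (hQ : IsPullback a q y f)
      (u0 : A ⟶ PI0) (hu0 : u0 ≫ pf0 = y),
      ((Φ y (pullback.fst y ρ) (pullback.snd y ρ) (IsPullback.of_hasPullback y ρ)).symm
        ⟨hM.lift (pullback.snd y ρ)
          (hQ.lift (pullback.fst y ρ) (pullback.snd y ρ ≫ p) (hk' y) ≫
            (pullback.lift a (q ≫ i) (hk y a q hQ) ≫
              (Φ y (pullback.fst y ρ) (pullback.snd y ρ) (IsPullback.of_hasPullback y ρ)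
                ⟨u0, hu0⟩).1 ≫ pullback.snd p m ≫ jg) ≫ lg)
          (hb y a q hQ _ (hmem y a q hQ u0 hu0)), hM.lift_fst _ _ _⟩).1 = u0 ≫ e := by
    intro A Q y a q hQ u0 hu0
    have h4 : (⟨hM.lift (pullback.snd y ρ)
        (hQ.lift (pullback.fst y ρ) (pullback.snd y ρ ≫ p) (hk' y) ≫
          (pullback.lift a (q ≫ i) (hk y a q hQ) ≫
            (Φ y (pullback.fst y ρ) (pullback.snd y ρ) (IsPullback.of_hasPullback y ρ)
              ⟨u0, hu0⟩).1 ≫ pullback.snd p m ≫ jg) ≫ lg)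
        (hb y a q hQ _ (hmem y a q hQ u0 hu0)), hM.lift_fst _ _ _⟩ :
        {v : pullback y ρ ⟶ pullback p m // v ≫ pullback.fst p m = pullback.snd y ρ}) =
        Φ y (pullback.fst y ρ) (pullback.snd y ρ) (IsPullback.of_hasPullback y ρ)
          ⟨u0 ≫ e, hXe u0 hu0⟩ :=
      Subtype.ext (main1 y a q hQ u0 hu0)
    rw [h4, Equiv.symm_apply_apply]
  have main3 : ∀ {A Q : C} (y : A ⟶ Y) (a : Q ⟶ A) (q : Q ⟶ X) (hQ : IsPullback a q y f)
      (uu : A ⟶ PI) (huu : uu ≫ S ≫ pf0 = y),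
      ((Φ y (pullback.fst y ρ) (pullback.snd y ρ) (IsPullback.of_hasPullback y ρ)).symm
        ⟨hM.lift (pullback.snd y ρ)
          (hQ.lift (pullback.fst y ρ) (pullback.snd y ρ ≫ p) (hk' y) ≫
            (pullback.lift a (q ≫ i) (hk y a q hQ) ≫
              (Φ y (pullback.fst y ρ) (pullback.snd y ρ) (IsPullback.of_hasPullback y ρ)
                ⟨uu ≫ S, hUS uu huu⟩).1 ≫ pullback.snd p m ≫ jg) ≫ lg)
          (hb y a q hQ _ (hmem y a q hQ (uu ≫ S) (hUS uu huu))),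
          hM.lift_fst _ _ _⟩).1 ≫ R = uu := by
    intro A Q y a q hQ uu huu
    rw [main1' y a q hQ (uu ≫ S) (hUS uu huu)]
    simp only [Category.assoc, heR, hSR, Category.comp_id]
  have main2 : ∀ {A Q : C} (y : A ⟶ Y) (a : Q ⟶ A) (q : Q ⟶ X) (hQ : IsPullback a q y f)
      (v0 : Q ⟶ W) (hv0 : v0 ≫ g = q),
      pullback.lift a (q ≫ i) (hk y a q hQ) ≫
        (Φ y (pullback.fst y ρ) (pullback.snd y ρ) (IsPullback.of_hasPullback y ρ)
          ⟨(((Φ y (pullback.fst y ρ) (pullback.snd y ρ)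
              (IsPullback.of_hasPullback y ρ)).symm
              ⟨hM.lift (pullback.snd y ρ)
                (hQ.lift (pullback.fst y ρ) (pullback.snd y ρ ≫ p) (hk' y) ≫ v0 ≫ lg)
                (hb y a q hQ v0 hv0), hM.lift_fst _ _ _⟩).1 ≫ R) ≫ S,
            hUS _ (hinvmem _ (((Φ y (pullback.fst y ρ) (pullback.snd y ρ)
              (IsPullback.of_hasPullback y ρ)).symm
              ⟨hM.lift (pullback.snd y ρ)
                (hQ.lift (pullback.fst y ρ) (pullback.snd y ρ ≫ p) (hk' y) ≫ v0 ≫ lg)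
                (hb y a q hQ v0 hv0), hM.lift_fst _ _ _⟩).2))⟩).1 ≫
        pullback.snd p m ≫ jg = v0 := by
    intro A Q y a q hQ v0 hv0
    set x := (Φ y (pullback.fst y ρ) (pullback.snd y ρ)
      (IsPullback.of_hasPullback y ρ)).symm
      ⟨hM.lift (pullback.snd y ρ)
        (hQ.lift (pullback.fst y ρ) (pullback.snd y ρ ≫ p) (hk' y) ≫ v0 ≫ lg)
        (hb y a q hQ v0 hv0), hM.lift_fst _ _ _⟩ with hxdef
    rw [show (⟨(x.1 ≫ R) ≫ S, hUS _ (hinvmem _ x.2)⟩ :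
        {u0 : A ⟶ PI0 // u0 ≫ pf0 = y}) = ⟨x.1 ≫ e, hXe x.1 x.2⟩ from
      Subtype.ext (show (x.1 ≫ R) ≫ S = x.1 ≫ e by rw [Category.assoc, hRS])]
    rw [reassoc_of% (key y x.1 x.2)]
    have hxx : Φ y (pullback.fst y ρ) (pullback.snd y ρ) (IsPullback.of_hasPullback y ρ)
        ⟨x.1, x.2⟩ =
        ⟨hM.lift (pullback.snd y ρ)
          (hQ.lift (pullback.fst y ρ) (pullback.snd y ρ ≫ p) (hk' y) ≫ v0 ≫ lg)
          (hb y a q hQ v0 hv0), hM.lift_fst _ _ _⟩ := by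
      rw [show (⟨x.1, x.2⟩ : {u0 : A ⟶ PI0 // u0 ≫ pf0 = y}) = x from rfl, hxdef]
      exact Equiv.apply_symm_apply _ _
    rw [hxx]
    dsimp only
    rw [← hkk y a q hQ]
    simp only [Category.assoc, IsPullback.lift_snd_assoc, reassoc_of% hlj, hlj,
      Category.comp_id, reassoc_of% (hkk2 y a q hQ)]
  refine ⟨PI, S ≫ pf0, bar_of_retract ⟨S, 𝟙 Y, R, 𝟙 Y, by rw [Category.comp_id], by
      rw [Category.comp_id, ← Category.assoc, hRS, he], hSR, Category.id_comp _⟩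
      (bar_of_mem hpf0D), ?_⟩
  refine ⟨fun {A Q} y a q hQ =>
    ⟨fun u => ⟨pullback.lift a (q ≫ i) (hk y a q hQ) ≫
        (Φ y (pullback.fst y ρ) (pullback.snd y ρ) (IsPullback.of_hasPullback y ρ)
          ⟨u.1 ≫ S, hUS u.1 u.2⟩).1 ≫ pullback.snd p m ≫ jg,
        hmem y a q hQ (u.1 ≫ S) (hUS u.1 u.2)⟩,
     fun v => ⟨((Φ y (pullback.fst y ρ) (pullback.snd y ρ)
          (IsPullback.of_hasPullback y ρ)).symm
          ⟨hM.lift (pullback.snd y ρ)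
            (hQ.lift (pullback.fst y ρ) (pullback.snd y ρ ≫ p) (hk' y) ≫ v.1 ≫ lg)
            (hb y a q hQ v.1 v.2), hM.lift_fst _ _ _⟩).1 ≫ R,
        hinvmem _ (((Φ y (pullback.fst y ρ) (pullback.snd y ρ)
          (IsPullback.of_hasPullback y ρ)).symm
          ⟨hM.lift (pullback.snd y ρ)
            (hQ.lift (pullback.fst y ρ) (pullback.snd y ρ ≫ p) (hk' y) ≫ v.1 ≫ lg)
            (hb y a q hQ v.1 v.2), hM.lift_fst _ _ _⟩).2)⟩,
     fun u => Subtype.ext (main3 y a q hQ u.1 u.2),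
     fun v => Subtype.ext (main2 y a q hQ v.1 v.2)⟩, ?_⟩
  intro A A' Q Q' y y' t ht a q hQ a' q' hQ' s hsa hsq u' hu'
  simp only [Equiv.coe_fn_mk]
  rw [show (⟨(t ≫ u') ≫ S, hUS (t ≫ u') (by rw [Category.assoc, hu', ht])⟩ :
      {u0 : A ⟶ PI0 // u0 ≫ pf0 = y}) =
    ⟨t ≫ (u' ≫ S), by rw [Category.assoc, Category.assoc, hu', ht]⟩ from
    Subtype.ext (Category.assoc t u' S)]
  rw [hΦ y y' t ht (pullback.fst y ρ) (pullback.snd y ρ) (IsPullback.of_hasPullback y ρ)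
    (pullback.fst y' ρ) (pullback.snd y' ρ) (IsPullback.of_hasPullback y' ρ)
    (pullback.lift (pullback.fst y ρ ≫ t) (pullback.snd y ρ)
      (by rw [Category.assoc, ht]; exact pullback.condition))
    (pullback.lift_fst _ _ _) (pullback.lift_snd _ _ _) (u' ≫ S) (hUS u' hu')]
  have hks : pullback.lift a (q ≫ i) (hk y a q hQ) ≫
      pullback.lift (pullback.fst y ρ ≫ t) (pullback.snd y ρ)
        (by rw [Category.assoc, ht]; exact pullback.condition) =
      s ≫ pullback.lift a' (q' ≫ i) (hk y' a' q' hQ') := by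
    apply pullback.hom_ext <;>
      simp [pullback.lift_fst, pullback.lift_snd, pullback.lift_fst_assoc,
        pullback.lift_snd_assoc, Category.assoc, hsa, reassoc_of% hsq, hsq]
  simp only [Category.assoc]
  rw [reassoc_of% hks]

/-- If `C` is Cauchy complete and `(C, D)` is a display map category
modeling `Σ`-, functorial `Id`-, and `Π`-types, then `(C, D̄)` models `Π`-types. -/
theorem statement_1 (hC : IsIdempotentComplete C) (D : MorphismProperty C)
    (hDMC : IsDisplayMapCategory D) (hSigma : ModelsSigma D)
    (hId : ModelsFunctorialId D) (hPi : ModelsPi D) :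
    ModelsPi (Bar D) := by
  intro W X Y g f hg hf
  obtain ⟨idd⟩ := hId
  obtain ⟨Xb, i, p, ρ, hρD, hip, hiρ, hpf⟩ := exists_retract hDMC hSigma idd f hf
  obtain ⟨Wb, lg, jg, m, hmD, hlj, hlm, hjm⟩ := exists_retract hDMC hSigma idd g hg
  exact main_aux hC hDMC hPi f g i p ρ hρD hip hiρ hpf lg jg m hmD hlj hlm hjm

end DMCPaper
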